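/- Let ε be a complex number satisfying either Re ε > 0 and ε⁻¹ ∉ ℤ, or Re ε = 0 and Im ε > 0, and define f(m,n) = −n(1+εn)/(1+ε(m+n)) for m,n ∈ ℤ. Then for all m,n,l ∈ ℤ: (i) f(m,n) − f(n,m) = m − n, and (ii) (m−n)·f(m+n,l) = f(n,l)·f(m,n+l) − f(m,l)·f(n,m+l). -/
import Mathlib


/-- With ε as in the classification and
f(m,n) = −n(1+εn)/(1+ε(m+n)), the function f satisfies
f(m,n) − f(n,m) = m − n and the left-symmetry identity
(m−n)f(m+n,l) = f(n,l)f(m,n+l) − f(m,l)f(n,m+l). -/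
theorem virasoro_left_symmetric_structure (ε : ℂ)
    (hε : (0 < ε.re ∧ ∀ k : ℤ, ε⁻¹ ≠ (k : ℂ)) ∨ (ε.re = 0 ∧ 0 < ε.im))
    (f : ℤ → ℤ → ℂ)
    (hf : ∀ m n : ℤ,
      f m n = -(n : ℂ) * (1 + ε * (n : ℂ)) / (1 + ε * ((m : ℂ) + (n : ℂ)))) :
    ∀ m n l : ℤ,
      f m n - f n m = (m : ℂ) - (n : ℂ) ∧
      ((m : ℂ) - (n : ℂ)) * f (m + n) l
        = f n l * f m (n + l) - f m l * f n (m + l) := by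
  have hne : ∀ k : ℤ, (1 : ℂ) + ε * (k : ℂ) ≠ 0 := by
    intro k hk
    rcases hε with ⟨hre, hZ⟩ | ⟨hre, him⟩
    · have h1 : ε * ((-k : ℤ) : ℂ) = 1 := by push_cast; linear_combination -hk
      exact hZ (-k) (inv_eq_of_mul_eq_one_right h1)
    · have := congrArg Complex.re hk
      simp [Complex.add_re, Complex.mul_re, hre] at this
  have key : ∀ a b : ℂ, (∃ k : ℤ, a + b = (k : ℂ)) → (1 : ℂ) + ε * (a + b) ≠ 0 := by
    intro a b ⟨k, hk⟩; rw [hk]; exact hne k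
  intro m n l
  have h1 : (1 : ℂ) + ε * ((m : ℂ) + (n : ℂ)) ≠ 0 := by
    have := hne (m + n); push_cast at this; exact this
  have h2 : (1 : ℂ) + ε * ((n : ℂ) + (m : ℂ)) ≠ 0 := by
    have := hne (n + m); push_cast at this; exact this
  have h3 : (1 : ℂ) + ε * ((m : ℂ) + (n : ℂ) + (l : ℂ)) ≠ 0 := by
    have := hne (m + n + l); push_cast at this; exact this
  have h4 : (1 : ℂ) + ε * ((n : ℂ) + (l : ℂ)) ≠ 0 := by
    have := hne (n + l); push_cast at this; exact this
  have h5 : (1 : ℂ) + ε * ((m : ℂ) + (l : ℂ)) ≠ 0 := by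
    have := hne (m + l); push_cast at this; exact this
  constructor
  · rw [hf m n, hf n m]
    field_simp
    ring
  · rw [hf (m + n) l, hf n l, hf m (n + l), hf m l, hf n (m + l)]
    push_cast
    rw [show (m:ℂ) + ((n:ℂ) + (l:ℂ)) = (m:ℂ) + (n:ℂ) + (l:ℂ) from by ring,
        show (n:ℂ) + ((m:ℂ) + (l:ℂ)) = (m:ℂ) + (n:ℂ) + (l:ℂ) from by ring]
    field_simp
    ring
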